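/- Assume in addition: (i) hierarchical splitting: for every ℓ' ∈ ℕ₀^d with ‖ℓ'‖₁ ≤ n, the nodal space V_{ℓ'} is contained in span{x ↦ ∏_t φ_{ℓ''_t,i''_t}(x_t) : ℓ'' ≤ ℓ' componentwise, i'' ∈ I_{ℓ''}}; and (ii) uniqueness of sparse grid interpolation: every function in V^s_{n,d} that vanishes at every point x_{ℓ,i} with ‖ℓ‖₁ ≤ n and i ∈ I_ℓ is identically zero. Let f : [0,1]^d → ℝ and define the combined sparse grid interpolant f^{s,ct} := ∑_{q=0}^{d−1} (−1)^q · C(d−1,q) · ∑_{ℓ' ∈ ℕ₀^d : ‖ℓ'‖₁ = n−q} f_{ℓ'}, where f_{ℓ'} is the full grid interpolant of f of level ℓ'. Then f^{s,ct} ∈ V^s_{n,d} and f^{s,ct}(x_{ℓ,i}) = f(x_{ℓ,i}) for every ℓ with ‖ℓ‖₁ ≤ n and every i ∈ I_ℓ; consequently, if f^s ∈ V^s_{n,d} satisfies f^s(x_{ℓ,i}) = f(x_{ℓ,i}) for all such (ℓ,i), then f^{s,ct} = f^s. (Theorem 4.3, sparse grid combination technique.) -/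

import Mathlib

/-- The hierarchical index set: `I_0 = {0,1}`, and for `ℓ ≥ 1` the odd indices in
`{1, …, 2^ℓ − 1}`. -/
def hierIndex (lam : ℕ) : Finset ℕ :=
  if lam = 0 then ({0, 1} : Finset ℕ)
  else (Finset.range (2 ^ lam)).filter fun j => Odd j

/-- The grid point `x_{lam,j} = j / 2^lam ∈ [0,1]` (junk value for `j > 2^lam`). -/
noncomputable def gridPt (lam j : ℕ) : Set.Icc (0:ℝ) 1 :=
  if h : j ≤ 2 ^ lam then
    ⟨(j : ℝ) / 2 ^ lam, Set.mem_Icc.mpr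
      ⟨by positivity, by
        rw [div_le_one (by positivity)]
        exact_mod_cast h⟩⟩
  else ⟨0, Set.mem_Icc.mpr ⟨le_rfl, zero_le_one⟩⟩

/-- The nodal space `V_{ℓ'}` spanned by the tensor products of the nodal basis of level `ℓ'`. -/
noncomputable def nodalSpace (d : ℕ) (φ : ℕ → ℕ → Set.Icc (0:ℝ) 1 → ℝ)
    (ℓ' : Fin d → ℕ) : Submodule ℝ ((Fin d → Set.Icc (0:ℝ) 1) → ℝ) :=
  Submodule.span ℝ (Set.range fun i : (∀ t, Fin (2 ^ (ℓ' t) + 1)) =>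
    fun x : Fin d → Set.Icc (0:ℝ) 1 => ∏ t, φ (ℓ' t) (i t) (x t))

/-- The span of the hierarchical functions of levels `≤ ℓ'` componentwise. -/
noncomputable def hierSpace (d : ℕ) (φ : ℕ → ℕ → Set.Icc (0:ℝ) 1 → ℝ)
    (ℓ' : Fin d → ℕ) : Submodule ℝ ((Fin d → Set.Icc (0:ℝ) 1) → ℝ) :=
  Submodule.span ℝ (Set.range fun pr : {pr : (Fin d → ℕ) × (Fin d → ℕ) //
      (∀ t, pr.1 t ≤ ℓ' t) ∧ ∀ t, pr.2 t ∈ hierIndex (pr.1 t)} =>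
    fun x : Fin d → Set.Icc (0:ℝ) 1 => ∏ t, φ (pr.1.1 t) (pr.1.2 t) (x t))

/-- The regular sparse grid space `V^s_{n,d}`. -/
noncomputable def sparseSpace (d n : ℕ) (φ : ℕ → ℕ → Set.Icc (0:ℝ) 1 → ℝ) :
    Submodule ℝ ((Fin d → Set.Icc (0:ℝ) 1) → ℝ) :=
  Submodule.span ℝ (Set.range fun pr : {pr : (Fin d → ℕ) × (Fin d → ℕ) //
      (∑ t, pr.1 t) ≤ n ∧ ∀ t, pr.2 t ∈ hierIndex (pr.1 t)} =>
    fun x : Fin d → Set.Icc (0:ℝ) 1 => ∏ t, φ (pr.1.1 t) (pr.1.2 t) (x t))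

/-- The combined sparse grid interpolant
`f^{s,ct} = ∑_{q=0}^{d−1} (−1)^q C(d−1,q) ∑_{‖ℓ'‖₁ = n−q} F ℓ'`. -/
noncomputable def combined (d n : ℕ)
    (F : (Fin d → ℕ) → ((Fin d → Set.Icc (0:ℝ) 1) → ℝ)) :
    (Fin d → Set.Icc (0:ℝ) 1) → ℝ :=
  ∑ q ∈ Finset.range d, ((-1 : ℝ) ^ q * ((d - 1).choose q : ℝ)) •
    ∑ ℓ' ∈ (Fintype.piFinset fun _ : Fin d => Finset.range (n + 1)).filter
      (fun ℓ' => (∑ t, (ℓ' t : ℤ)) = (n : ℤ) - q), F ℓ'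



lemma hierIndex_le {lam i : ℕ} (h : i ∈ hierIndex lam) : i ≤ 2 ^ lam := by
  unfold hierIndex at h
  split at h
  · simp only [Finset.mem_insert, Finset.mem_singleton] at h
    rcases h with rfl | rfl
    · exact Nat.zero_le _
    · exact Nat.one_le_two_pow
  · exact le_of_lt (Finset.mem_range.mp (Finset.mem_filter.mp h).1)

lemma gridPt_coarse {lam mu : ℕ} (hlm : lam ≤ mu) {j : ℕ} (hj : j ≤ 2 ^ lam) :
    gridPt mu (j * 2 ^ (mu - lam)) = gridPt lam j := by
  have key : 2 ^ (mu - lam) * 2 ^ lam = 2 ^ mu := by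
    rw [← pow_add, Nat.sub_add_cancel hlm]
  have hb : j * 2 ^ (mu - lam) ≤ 2 ^ mu := by
    calc j * 2 ^ (mu - lam) ≤ 2 ^ lam * 2 ^ (mu - lam) := Nat.mul_le_mul_right _ hj
      _ = 2 ^ mu := by rw [mul_comm]; exact key
  unfold gridPt
  rw [dif_pos hb, dif_pos hj]
  apply Subtype.ext
  have keyR : (2:ℝ) ^ (mu - lam) * 2 ^ lam = 2 ^ mu := by exact_mod_cast key
  show ((j * 2 ^ (mu - lam) : ℕ) : ℝ) / 2 ^ mu = (j : ℝ) / 2 ^ lam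
  push_cast
  rw [← keyR]
  rw [div_eq_div_iff (by positivity) (by positivity)]
  ring

section Lag

variable (φ : ℕ → ℕ → Set.Icc (0:ℝ) 1 → ℝ)

noncomputable def gridMat (lam : ℕ) : Matrix (Fin (2 ^ lam + 1)) (Fin (2 ^ lam + 1)) ℝ :=
  Matrix.of fun j j' : Fin (2 ^ lam + 1) => φ lam (j' : ℕ) (gridPt lam (j : ℕ))

variable (hinv : ∀ lam : ℕ, IsUnit (gridMat φ lam))

noncomputable def invMat (lam : ℕ) : Matrix (Fin (2 ^ lam + 1)) (Fin (2 ^ lam + 1)) ℝ :=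
  ((hinv lam).unit⁻¹ : (Matrix (Fin (2 ^ lam + 1)) (Fin (2 ^ lam + 1)) ℝ)ˣ)

lemma mul_invMat (lam : ℕ) : gridMat φ lam * invMat φ hinv lam = 1 := by
  have h := (hinv lam).unit.mul_inv
  rwa [(hinv lam).unit_spec] at h

lemma invMat_mul (lam : ℕ) : invMat φ hinv lam * gridMat φ lam = 1 := by
  have h := (hinv lam).unit.inv_mul
  rwa [(hinv lam).unit_spec] at h

noncomputable def Lag (lam : ℕ) (a : Fin (2 ^ lam + 1)) (x : Set.Icc (0:ℝ) 1) : ℝ :=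
  ∑ b : Fin (2 ^ lam + 1), invMat φ hinv lam b a * φ lam (b : ℕ) x

lemma Lag_grid (lam : ℕ) (a j : Fin (2 ^ lam + 1)) :
    Lag φ hinv lam a (gridPt lam (j : ℕ)) = if j = a then 1 else 0 := by
  have h2 := congrFun (congrFun (mul_invMat φ hinv lam) j) a
  rw [Matrix.mul_apply, Matrix.one_apply] at h2
  rw [← h2, Lag]
  exact Finset.sum_congr rfl fun b _ => mul_comm _ _

lemma Lag_reproduce (lam : ℕ) (a : Fin (2 ^ lam + 1)) (x : Set.Icc (0:ℝ) 1) :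
    ∑ j : Fin (2 ^ lam + 1), φ lam (a : ℕ) (gridPt lam (j : ℕ)) * Lag φ hinv lam j x
      = φ lam (a : ℕ) x := by
  have key : ∀ b, (∑ j : Fin (2 ^ lam + 1), invMat φ hinv lam b j * gridMat φ lam j a)
      = if b = a then (1:ℝ) else 0 := fun b => by
    have h2 := congrFun (congrFun (invMat_mul φ hinv lam) b) a
    rwa [Matrix.mul_apply, Matrix.one_apply] at h2
  calc ∑ j : Fin (2 ^ lam + 1), φ lam (a : ℕ) (gridPt lam (j : ℕ)) * Lag φ hinv lam j x
      = ∑ j : Fin (2 ^ lam + 1), ∑ b : Fin (2 ^ lam + 1),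
          invMat φ hinv lam b j * gridMat φ lam j a * φ lam (b : ℕ) x := by
        refine Finset.sum_congr rfl fun j _ => ?_
        rw [Lag, Finset.mul_sum]
        refine Finset.sum_congr rfl fun b _ => ?_
        show φ lam (a : ℕ) (gridPt lam (j : ℕ)) * (invMat φ hinv lam b j * φ lam (b : ℕ) x)
          = invMat φ hinv lam b j * φ lam (a : ℕ) (gridPt lam (j : ℕ)) * φ lam (b : ℕ) x
        ring
    _ = ∑ b : Fin (2 ^ lam + 1), (∑ j : Fin (2 ^ lam + 1),
          invMat φ hinv lam b j * gridMat φ lam j a) * φ lam (b : ℕ) x := by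
        rw [Finset.sum_comm]
        exact Finset.sum_congr rfl fun b _ => (Finset.sum_mul _ _ _).symm
    _ = φ lam (a : ℕ) x := by
        simp only [key, ite_mul, one_mul, zero_mul]
        rw [Finset.sum_ite_eq' Finset.univ a (fun b : Fin (2 ^ lam + 1) => φ lam (b : ℕ) x)]
        simp

end Lag

lemma nodal_repr (d : ℕ) (φ : ℕ → ℕ → Set.Icc (0:ℝ) 1 → ℝ)
    (hinv : ∀ lam : ℕ, IsUnit (gridMat φ lam)) (ℓ' : Fin d → ℕ)
    {g : (Fin d → Set.Icc (0:ℝ) 1) → ℝ} (hg : g ∈ nodalSpace d φ ℓ')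
    (x : Fin d → Set.Icc (0:ℝ) 1) :
    g x = ∑ j : (∀ t, Fin (2 ^ (ℓ' t) + 1)),
      g (fun t => gridPt (ℓ' t) (j t)) * ∏ t, Lag φ hinv (ℓ' t) (j t) (x t) := by
  induction hg using Submodule.span_induction with
  | mem g hgm =>
    obtain ⟨i, rfl⟩ := hgm
    show ∏ t, φ (ℓ' t) (i t) (x t) = ∑ j : (∀ t, Fin (2 ^ (ℓ' t) + 1)),
      (∏ t, φ (ℓ' t) (i t) (gridPt (ℓ' t) (j t))) * ∏ t, Lag φ hinv (ℓ' t) (j t) (x t)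
    calc ∏ t, φ (ℓ' t) (i t) (x t)
        = ∏ t, ∑ jt : Fin (2 ^ (ℓ' t) + 1),
            φ (ℓ' t) (i t) (gridPt (ℓ' t) (jt : ℕ)) * Lag φ hinv (ℓ' t) jt (x t) := by
          exact Finset.prod_congr rfl fun t _ => (Lag_reproduce φ hinv (ℓ' t) (i t) (x t)).symm
      _ = ∑ j ∈ Fintype.piFinset (fun t => (Finset.univ : Finset (Fin (2 ^ (ℓ' t) + 1)))),
            ∏ t, φ (ℓ' t) (i t) (gridPt (ℓ' t) (j t)) * Lag φ hinv (ℓ' t) (j t) (x t) :=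
          Finset.prod_univ_sum _ _
      _ = ∑ j : (∀ t, Fin (2 ^ (ℓ' t) + 1)),
            (∏ t, φ (ℓ' t) (i t) (gridPt (ℓ' t) (j t))) * ∏ t, Lag φ hinv (ℓ' t) (j t) (x t) := by
          rw [Fintype.piFinset_univ]
          exact Finset.sum_congr rfl fun j _ => Finset.prod_mul_distrib
  | zero => simp
  | add a b ha hb iha ihb =>
    show a x + b x = _
    simp only [Pi.add_apply, add_mul, Finset.sum_add_distrib, iha, ihb]
  | smul r a ha iha =>
    show r * a x = _
    simp only [Pi.smul_apply, smul_eq_mul, iha, Finset.mul_sum, mul_assoc]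


lemma sum_powerset_neg_one_pow_card_real {α : Type*} [DecidableEq α] (x : Finset α) :
    ∑ m ∈ x.powerset, ((-1:ℝ)) ^ m.card = if x = ∅ then 1 else 0 := by
  have h := Finset.sum_powerset_neg_one_pow_card (x := x)
  have h2 := congrArg (Int.cast : ℤ → ℝ) h
  push_cast at h2
  exact h2

lemma indicator_sum_int {d : ℕ} (S : Finset (Fin d)) :
    ∑ t : Fin d, (if t ∈ S then (1:ℤ) else 0) = S.card := by
  simp [Finset.sum_boole]

lemma signed_count (d n : ℕ) (hd : 1 ≤ d) (μ : Fin d → ℕ)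
    (hμ : (∑ t, μ t) ≤ n) :
    ∑ q ∈ Finset.range d, (-1:ℝ) ^ q * ((d - 1).choose q : ℝ) *
      (((Fintype.piFinset fun _ : Fin d => Finset.range (n + 1)).filter
        (fun ℓ' => (∑ t, (ℓ' t : ℤ)) = (n : ℤ) - q ∧ ∀ t, μ t ≤ ℓ' t)).card : ℝ) = 1 := by
  classical
  set box := Fintype.piFinset fun _ : Fin d => Finset.range (n + 1) with hbox
  set t0 : Fin d := ⟨0, Nat.lt_of_lt_of_le Nat.zero_lt_one hd⟩ with ht0
  set E : Finset (Fin d) := Finset.univ.erase t0 with hE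
  have hEcard : E.card = d - 1 := by
    rw [hE, Finset.card_erase_of_mem (Finset.mem_univ _), Finset.card_univ, Fintype.card_fin]
  set N : ℤ → Finset (Fin d → ℕ) := fun s => box.filter
      (fun ℓ' => (∑ t, (ℓ' t : ℤ)) = s ∧ ∀ t, μ t ≤ ℓ' t) with hN
  have memN : ∀ (s : ℤ) (m : Fin d → ℕ), m ∈ N s ↔
      ((∀ t, m t ≤ n) ∧ (∑ t, (m t : ℤ)) = s ∧ (∀ t, μ t ≤ m t)) := by
    intro s m
    rw [hN, Finset.mem_filter, hbox, Fintype.mem_piFinset]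
    simp only [Finset.mem_range, Nat.lt_succ_iff]
  have step1 : ∑ q ∈ Finset.range d, (-1:ℝ) ^ q * ((d - 1).choose q : ℝ) *
      (((N ((n:ℤ) - q))).card : ℝ)
      = ∑ S ∈ E.powerset, (-1:ℝ) ^ S.card * ((N ((n:ℤ) - S.card)).card : ℝ) := by
    rw [Finset.sum_powerset, hEcard]
    have hd1 : d - 1 + 1 = d := by omega
    rw [hd1]
    refine Finset.sum_congr rfl fun q hq => ?_
    calc (-1:ℝ) ^ q * ((d - 1).choose q : ℝ) * ((N ((n:ℤ) - q)).card : ℝ)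
        = ((d-1).choose q) • ((-1:ℝ) ^ q * ((N ((n:ℤ) - q)).card : ℝ)) := by
          rw [nsmul_eq_mul]; ring
      _ = ∑ S ∈ Finset.powersetCard q E, (-1:ℝ) ^ S.card * ((N ((n:ℤ) - S.card)).card : ℝ) := by
          rw [Finset.sum_congr rfl (fun S hS => by
            rw [(Finset.mem_powersetCard.mp hS).2]),
            Finset.sum_const, Finset.card_powersetCard, hEcard]
  have step2 : ∑ S ∈ E.powerset, (-1:ℝ) ^ S.card * ((N ((n:ℤ) - S.card)).card : ℝ)
      = ∑ m ∈ N (n:ℤ), ∑ S ∈ (E.filter fun t => μ t < m t).powerset, (-1:ℝ) ^ S.card := by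
    have hrw : ∀ S : Finset (Fin d), (-1:ℝ) ^ S.card * ((N ((n:ℤ) - S.card)).card : ℝ)
        = ∑ _ℓ' ∈ N ((n:ℤ) - S.card), (-1:ℝ) ^ S.card := by
      intro S; rw [Finset.sum_const, nsmul_eq_mul, mul_comm]
    rw [Finset.sum_congr rfl fun S _ => hrw S]
    rw [Finset.sum_sigma' (E.powerset) (fun S => N ((n:ℤ) - S.card))
      (fun S _ℓ' => (-1:ℝ) ^ S.card)]
    rw [Finset.sum_sigma' (N (n:ℤ)) (fun m => (E.filter fun t => μ t < m t).powerset)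
      (fun _m S => (-1:ℝ) ^ S.card)]
    refine Finset.sum_nbij'
      (fun a => ⟨fun t => a.2 t + if t ∈ a.1 then 1 else 0, a.1⟩)
      (fun b => ⟨b.2, fun t => b.1 t - if t ∈ b.2 then 1 else 0⟩) ?_ ?_ ?_ ?_ ?_
    · rintro ⟨S, ℓ'⟩ ha
      rw [Finset.mem_sigma] at ha
      obtain ⟨hS, hℓ⟩ := ha
      rw [Finset.mem_powerset] at hS
      rw [memN] at hℓ
      obtain ⟨hbox1, hsum, hge⟩ := hℓ
      rw [Finset.mem_sigma]
      have hsum2 : ∑ t, ((ℓ' t + if t ∈ S then 1 else 0 : ℕ) : ℤ) = (n:ℤ) := by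
        have hcast : ∀ t, ((ℓ' t + if t ∈ S then 1 else 0 : ℕ) : ℤ)
            = (ℓ' t : ℤ) + (if t ∈ S then (1:ℤ) else 0) := by
          intro t; by_cases ht : t ∈ S <;> simp [ht]
        rw [Finset.sum_congr rfl fun t _ => hcast t, Finset.sum_add_distrib,
          indicator_sum_int, hsum]
        ring
      constructor
      · rw [memN]
        refine ⟨?_, hsum2, ?_⟩
        · intro t
          have h1 : ((ℓ' t + if t ∈ S then 1 else 0 : ℕ) : ℤ) ≤ (n:ℤ) := by
            rw [← hsum2]
            exact Finset.single_le_sum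
              (f := fun s => ((ℓ' s + if s ∈ S then 1 else 0 : ℕ) : ℤ))
              (fun s _ => by positivity) (Finset.mem_univ t)
          exact_mod_cast h1
        · intro t
          exact le_trans (hge t) (Nat.le_add_right _ _)
      · rw [Finset.mem_powerset]
        intro t ht
        rw [Finset.mem_filter]
        refine ⟨hS ht, ?_⟩
        show μ t < ℓ' t + if t ∈ S then 1 else 0
        rw [if_pos ht]
        exact Nat.lt_succ_of_le (hge t)
    · rintro ⟨m, S⟩ hb
      rw [Finset.mem_sigma] at hb
      obtain ⟨hm, hS⟩ := hb
      rw [Finset.mem_powerset] at hS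
      rw [memN] at hm
      obtain ⟨hbox1, hsum, hge⟩ := hm
      have hlt : ∀ t ∈ S, μ t < m t := fun t ht => (Finset.mem_filter.mp (hS ht)).2
      rw [Finset.mem_sigma]
      constructor
      · rw [Finset.mem_powerset]
        exact subset_trans hS (Finset.filter_subset _ _)
      · rw [memN]
        refine ⟨?_, ?_, ?_⟩
        · intro t; exact le_trans (Nat.sub_le _ _) (hbox1 t)
        case refine_3 =>
          intro t
          by_cases ht : t ∈ S
          · have := hlt t ht
            show μ t ≤ m t - if t ∈ S then 1 else 0
            rw [if_pos ht]
            omega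
          · show μ t ≤ m t - if t ∈ S then 1 else 0
            rw [if_neg ht]
            simpa using hge t
        · have hcast : ∀ t, ((m t - if t ∈ S then 1 else 0 : ℕ) : ℤ)
              = (m t : ℤ) - (if t ∈ S then (1:ℤ) else 0) := by
            intro t
            by_cases ht : t ∈ S
            · have h1 : 1 ≤ m t := by have := hlt t ht; omega
              rw [if_pos ht, if_pos ht, Nat.cast_sub h1, Nat.cast_one]
            · rw [if_neg ht, if_neg ht]
              simp
          rw [Finset.sum_congr rfl fun t _ => hcast t, Finset.sum_sub_distrib,
            indicator_sum_int, hsum]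
    · rintro ⟨S, ℓ'⟩ _
      refine congrArg (Sigma.mk S) (funext fun t => ?_)
      by_cases ht : t ∈ S <;> simp [ht]
    · rintro ⟨m, S⟩ hb
      rw [Finset.mem_sigma] at hb
      obtain ⟨hm, hS⟩ := hb
      rw [Finset.mem_powerset] at hS
      have hlt : ∀ t ∈ S, μ t < m t := fun t ht => (Finset.mem_filter.mp (hS ht)).2
      refine congrArg (fun z => (⟨z, S⟩ : (_ : Fin d → ℕ) × Finset (Fin d)))
        (funext fun t => ?_)
      by_cases ht : t ∈ S
      · have := hlt t ht
        simp only [if_pos ht]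
        omega
      · simp [ht]
    · rintro ⟨S, ℓ'⟩ _; rfl
  have step3 : ∑ m ∈ N (n:ℤ), ∑ S ∈ (E.filter fun t => μ t < m t).powerset, (-1:ℝ) ^ S.card
      = 1 := by
    rw [Finset.sum_congr rfl fun m _ => sum_powerset_neg_one_pow_card_real _]
    rw [Finset.sum_boole]
    set m0 : Fin d → ℕ := fun t => if t = t0 then μ t0 + (n - ∑ s, μ s) else μ t with hm0
    have hμt0 : μ t0 ≤ ∑ s, μ s := Finset.single_le_sum (fun s _ => Nat.zero_le _)
      (Finset.mem_univ t0)
    have hm0sum : ∑ t, (m0 t : ℤ) = (n : ℤ) := by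
      have hcast : ∀ t, (m0 t : ℤ)
          = (μ t : ℤ) + (if t = t0 then ((n:ℤ) - ∑ s, (μ s : ℤ)) else 0) := by
        intro t
        by_cases ht : t = t0
        · subst ht
          simp only [hm0, if_pos rfl]
          push_cast [Nat.cast_sub hμ]
          ring
        · simp [hm0, if_neg ht]
      rw [Finset.sum_congr rfl fun t _ => hcast t, Finset.sum_add_distrib,
        Finset.sum_ite_eq' Finset.univ t0]
      simp
    have hm0mem : m0 ∈ N (n:ℤ) := by
      rw [memN]
      refine ⟨?_, hm0sum, ?_⟩
      · intro t
        have h1 : (m0 t : ℤ) ≤ (n:ℤ) := by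
          rw [← hm0sum]
          exact Finset.single_le_sum (f := fun s => (m0 s : ℤ))
            (fun s _ => by positivity) (Finset.mem_univ t)
        exact_mod_cast h1
      · intro t
        by_cases ht : t = t0
        · subst ht; simp [hm0]
        · simp [hm0, if_neg ht]
    have hfilter : (N (n:ℤ)).filter (fun m => (E.filter fun t => μ t < m t) = ∅) = {m0} := by
      apply Finset.ext
      intro m
      rw [Finset.mem_filter, Finset.mem_singleton]
      constructor
      · rintro ⟨hm, hemp⟩
        rw [Finset.filter_eq_empty_iff] at hemp
        rw [memN] at hm
        obtain ⟨hbox1, hsum, hge⟩ := hm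
        have heq : ∀ t, t ≠ t0 → m t = μ t := by
          intro t ht
          have hte : t ∈ E := Finset.mem_erase.mpr ⟨ht, Finset.mem_univ t⟩
          have h1 := hemp hte
          have h2 := hge t
          omega
        funext t
        by_cases ht : t = t0
        · have h1 : (m t : ℤ) + ∑ x ∈ Finset.univ.erase t, (m x : ℤ) = (n:ℤ) :=
            (Finset.add_sum_erase Finset.univ (fun x => (m x : ℤ))
              (Finset.mem_univ t)).trans hsum
          have h2 : (m0 t : ℤ) + ∑ x ∈ Finset.univ.erase t, (m0 x : ℤ) = (n:ℤ) :=
            (Finset.add_sum_erase Finset.univ (fun x => (m0 x : ℤ))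
              (Finset.mem_univ t)).trans hm0sum
          have h3 : ∑ x ∈ Finset.univ.erase t, (m x : ℤ)
              = ∑ x ∈ Finset.univ.erase t, (m0 x : ℤ) := by
            refine Finset.sum_congr rfl fun x hx => ?_
            have hx' := (Finset.mem_erase.mp hx).1
            have hx'' : x ≠ t0 := by rw [← ht]; exact hx'
            rw [heq x hx'']
            simp [hm0, if_neg hx'']
          have h4 : (m t : ℤ) = (m0 t : ℤ) := by omega
          exact_mod_cast h4
        · rw [heq t ht]; simp [hm0, if_neg ht]
      · rintro rfl
        refine ⟨hm0mem, ?_⟩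
        rw [Finset.filter_eq_empty_iff]
        intro t ht
        have ht' : t ≠ t0 := (Finset.mem_erase.mp ht).1
        simp [hm0, if_neg ht']
    rw [hfilter]
    simp
  calc ∑ q ∈ Finset.range d, (-1:ℝ) ^ q * ((d - 1).choose q : ℝ) *
      (((Fintype.piFinset fun _ : Fin d => Finset.range (n + 1)).filter
        (fun ℓ' => (∑ t, (ℓ' t : ℤ)) = (n : ℤ) - q ∧ ∀ t, μ t ≤ ℓ' t)).card : ℝ)
      = ∑ q ∈ Finset.range d, (-1:ℝ) ^ q * ((d - 1).choose q : ℝ) *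
        ((N ((n:ℤ) - q)).card : ℝ) := rfl
    _ = 1 := by rw [step1, step2, step3]

lemma comb_core (d n : ℕ) (hd : 1 ≤ d) (u : Fin d → ℕ → ℝ) (k : Fin d → ℕ) (w : Fin d → ℝ)
    (hk : (∑ t, k t) ≤ n) (hu : ∀ t lam, k t ≤ lam → lam ≤ n → u t lam = w t) :
    ∑ q ∈ Finset.range d, (-1:ℝ) ^ q * ((d - 1).choose q : ℝ) *
      ∑ ℓ' ∈ (Fintype.piFinset fun _ : Fin d => Finset.range (n + 1)).filter
        (fun ℓ' => (∑ t, (ℓ' t : ℤ)) = (n : ℤ) - q), ∏ t, u t (ℓ' t)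
    = ∏ t, w t := by
  classical
  set box := Fintype.piFinset fun _ : Fin d => Finset.range (n + 1) with hbox
  have membox : ∀ μ : Fin d → ℕ, μ ∈ box ↔ ∀ t, μ t ≤ n := by
    intro μ
    rw [hbox, Fintype.mem_piFinset]
    simp only [Finset.mem_range, Nat.lt_succ_iff]
  set D : Fin d → ℕ → ℝ := fun t lam => u t lam - if lam = 0 then 0 else u t (lam - 1) with hD
  have htel : ∀ t lam, ∑ μ ∈ Finset.range (lam + 1), D t μ = u t lam := by
    intro t lam
    induction lam with
    | zero => simp [hD]
    | succ m ih =>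
      rw [Finset.sum_range_succ, ih, hD]
      simp only [Nat.succ_ne_zero, if_false, Nat.add_sub_cancel]
      ring
  have hDzero : ∀ t lam, k t < lam → lam ≤ n → D t lam = 0 := by
    intro t lam h1 h2
    have h3 : lam ≠ 0 := by omega
    rw [hD]
    simp only [if_neg h3]
    rw [hu t lam (le_of_lt h1) h2, hu t (lam - 1) (by omega) (by omega)]
    ring
  -- step A : per line, expand into D-sums and counts
  have keyA : ∀ q : ℕ, ∑ ℓ' ∈ box.filter (fun ℓ' => (∑ t, (ℓ' t : ℤ)) = (n : ℤ) - q),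
      ∏ t, u t (ℓ' t)
      = ∑ μ ∈ box, (∏ t, D t (μ t)) *
        ((box.filter (fun ℓ' => (∑ t, (ℓ' t : ℤ)) = (n : ℤ) - q ∧ ∀ t, μ t ≤ ℓ' t)).card : ℝ) := by
    intro q
    have perl : ∀ ℓ' ∈ box.filter (fun ℓ' => (∑ t, (ℓ' t : ℤ)) = (n : ℤ) - q),
        ∏ t, u t (ℓ' t) = ∑ μ ∈ box, (if ∀ t, μ t ≤ ℓ' t then ∏ t, D t (μ t) else 0) := by
      intro ℓ' hℓ
      have hℓb : ∀ t, ℓ' t ≤ n := (membox ℓ').mp (Finset.mem_filter.mp hℓ).1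
      calc ∏ t, u t (ℓ' t) = ∏ t, ∑ μt ∈ Finset.range (ℓ' t + 1), D t μt :=
            Finset.prod_congr rfl fun t _ => (htel t (ℓ' t)).symm
        _ = ∑ μ ∈ Fintype.piFinset (fun t => Finset.range (ℓ' t + 1)), ∏ t, D t (μ t) :=
            Finset.prod_univ_sum _ _
        _ = ∑ μ ∈ Fintype.piFinset (fun t => Finset.range (ℓ' t + 1)),
              (if ∀ t, μ t ≤ ℓ' t then ∏ t, D t (μ t) else 0) := by
            refine Finset.sum_congr rfl fun μ hμ => ?_
            rw [Fintype.mem_piFinset] at hμ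
            rw [if_pos (fun t => Nat.lt_succ_iff.mp (Finset.mem_range.mp (hμ t)))]
        _ = ∑ μ ∈ box, (if ∀ t, μ t ≤ ℓ' t then ∏ t, D t (μ t) else 0) := by
            refine Finset.sum_subset ?_ ?_
            · intro μ hμ
              rw [Fintype.mem_piFinset] at hμ
              rw [membox]
              exact fun t => le_trans (Nat.lt_succ_iff.mp (Finset.mem_range.mp (hμ t))) (hℓb t)
            · intro μ _ hnot
              refine if_neg (fun hall => hnot ?_)
              rw [Fintype.mem_piFinset]
              exact fun t => Finset.mem_range.mpr (Nat.lt_succ_of_le (hall t))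
    rw [Finset.sum_congr rfl perl, Finset.sum_comm]
    refine Finset.sum_congr rfl fun μ _ => ?_
    rw [Finset.sum_ite, Finset.sum_const, Finset.sum_const_zero, add_zero, nsmul_eq_mul,
      mul_comm, Finset.filter_filter]
  -- step B : swap q and μ
  have keyB : ∑ q ∈ Finset.range d, (-1:ℝ) ^ q * ((d - 1).choose q : ℝ) *
      ∑ ℓ' ∈ box.filter (fun ℓ' => (∑ t, (ℓ' t : ℤ)) = (n : ℤ) - q), ∏ t, u t (ℓ' t)
      = ∑ μ ∈ box, (∏ t, D t (μ t)) *
          ∑ q ∈ Finset.range d, (-1:ℝ) ^ q * ((d - 1).choose q : ℝ) *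
            ((box.filter (fun ℓ' => (∑ t, (ℓ' t : ℤ)) = (n : ℤ) - q ∧ ∀ t, μ t ≤ ℓ' t)).card : ℝ) := by
    calc ∑ q ∈ Finset.range d, (-1:ℝ) ^ q * ((d - 1).choose q : ℝ) *
        ∑ ℓ' ∈ box.filter (fun ℓ' => (∑ t, (ℓ' t : ℤ)) = (n : ℤ) - q), ∏ t, u t (ℓ' t)
        = ∑ q ∈ Finset.range d, ∑ μ ∈ box, (-1:ℝ) ^ q * ((d - 1).choose q : ℝ) *
            ((∏ t, D t (μ t)) *
              ((box.filter (fun ℓ' => (∑ t, (ℓ' t : ℤ)) = (n : ℤ) - q ∧ ∀ t, μ t ≤ ℓ' t)).card : ℝ)) := by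
          refine Finset.sum_congr rfl fun q _ => ?_
          rw [keyA q, Finset.mul_sum]
      _ = ∑ μ ∈ box, ∑ q ∈ Finset.range d, (-1:ℝ) ^ q * ((d - 1).choose q : ℝ) *
            ((∏ t, D t (μ t)) *
              ((box.filter (fun ℓ' => (∑ t, (ℓ' t : ℤ)) = (n : ℤ) - q ∧ ∀ t, μ t ≤ ℓ' t)).card : ℝ)) :=
          Finset.sum_comm
      _ = ∑ μ ∈ box, (∏ t, D t (μ t)) *
            ∑ q ∈ Finset.range d, (-1:ℝ) ^ q * ((d - 1).choose q : ℝ) *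
              ((box.filter (fun ℓ' => (∑ t, (ℓ' t : ℤ)) = (n : ℤ) - q ∧ ∀ t, μ t ≤ ℓ' t)).card : ℝ) := by
          refine Finset.sum_congr rfl fun μ _ => ?_
          rw [Finset.mul_sum]
          exact Finset.sum_congr rfl fun q _ => by ring
  rw [keyB]
  have hone : ∀ μ ∈ box, (∑ t, μ t) ≤ n →
      (∑ q ∈ Finset.range d, (-1:ℝ) ^ q * ((d - 1).choose q : ℝ) *
        ((box.filter (fun ℓ' => (∑ t, (ℓ' t : ℤ)) = (n : ℤ) - q ∧ ∀ t, μ t ≤ ℓ' t)).card : ℝ)) = 1 := by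
    intro μ _ h
    rw [hbox]
    exact signed_count d n hd μ h
  have hzero : ∀ μ ∈ box, ¬ ((∑ t, μ t) ≤ n) → ∏ t, D t (μ t) = 0 := by
    intro μ hμ hgt
    have hex : ∃ t, k t < μ t := by
      by_contra hno
      push_neg at hno
      exact hgt (le_trans (Finset.sum_le_sum fun t _ => hno t) hk)
    obtain ⟨t, htk⟩ := hex
    exact Finset.prod_eq_zero (Finset.mem_univ t)
      (hDzero t (μ t) htk ((membox μ).mp hμ t))
  calc ∑ μ ∈ box, (∏ t, D t (μ t)) *
        ∑ q ∈ Finset.range d, (-1:ℝ) ^ q * ((d - 1).choose q : ℝ) *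
          ((box.filter (fun ℓ' => (∑ t, (ℓ' t : ℤ)) = (n : ℤ) - q ∧ ∀ t, μ t ≤ ℓ' t)).card : ℝ)
      = ∑ μ ∈ box, ∏ t, D t (μ t) := by
        refine Finset.sum_congr rfl fun μ hμ => ?_
        by_cases hle : (∑ t, μ t) ≤ n
        · rw [hone μ hμ hle, mul_one]
        · rw [hzero μ hμ hle, zero_mul]
    _ = ∏ t, ∑ lam ∈ Finset.range (n + 1), D t lam := by
        rw [hbox]
        exact (Finset.prod_univ_sum _ _).symm
    _ = ∏ t, u t n := Finset.prod_congr rfl fun t _ => htel t n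
    _ = ∏ t, w t := by
        refine Finset.prod_congr rfl fun t _ => hu t n ?_ le_rfl
        exact le_trans (Finset.single_le_sum (fun s _ => Nat.zero_le _) (Finset.mem_univ t)) hk

lemma div_bound {n lam J : ℕ} (hJ : J ≤ 2 ^ n) : J / 2 ^ (n - lam) ≤ 2 ^ lam := by
  rcases le_or_gt lam n with h | h
  · calc J / 2 ^ (n - lam) ≤ 2 ^ n / 2 ^ (n - lam) := Nat.div_le_div_right hJ
      _ = 2 ^ lam := by
        rw [Nat.pow_div (Nat.sub_le n lam) (by norm_num)]
        congr 1
        omega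
  · have h0 : n - lam = 0 := by omega
    rw [h0, pow_zero, Nat.div_one]
    exact le_trans hJ (Nat.pow_le_pow_right (by norm_num) (le_of_lt h))

lemma emb_bound {n lt : ℕ} (h : lt ≤ n) {v : ℕ} (hv : v ≤ 2 ^ lt) : v * 2 ^ (n - lt) ≤ 2 ^ n := by
  calc v * 2 ^ (n - lt) ≤ 2 ^ lt * 2 ^ (n - lt) := Nat.mul_le_mul_right _ hv
    _ = 2 ^ n := by rw [← pow_add]; congr 1; omega

noncomputable def Ufun (φ : ℕ → ℕ → Set.Icc (0:ℝ) 1 → ℝ)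
    (hinv : ∀ lam : ℕ, IsUnit (gridMat φ lam)) (p : Set.Icc (0:ℝ) 1) (n lam : ℕ)
    (J : Fin (2 ^ n + 1)) : ℝ :=
  if h : 2 ^ (n - lam) ∣ (J : ℕ) then
    Lag φ hinv lam ⟨(J : ℕ) / 2 ^ (n - lam),
      Nat.lt_succ_of_le (div_bound (Nat.lt_succ_iff.mp J.isLt))⟩ p
  else 0

lemma Ufun_const (φ : ℕ → ℕ → Set.Icc (0:ℝ) 1 → ℝ)
    (hinv : ∀ lam : ℕ, IsUnit (gridMat φ lam)) {n ℓt lam it : ℕ}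
    (hit : it ≤ 2 ^ ℓt) (hl : ℓt ≤ lam) (hn : lam ≤ n) (J : Fin (2 ^ n + 1)) :
    Ufun φ hinv (gridPt ℓt it) n lam J
      = if (J : ℕ) = it * 2 ^ (n - ℓt) then 1 else 0 := by
  have hpos : 0 < 2 ^ (n - lam) := Nat.pow_pos (by norm_num)
  have hpow : 2 ^ (lam - ℓt) * 2 ^ (n - lam) = 2 ^ (n - ℓt) := by
    rw [← pow_add]; congr 1; omega
  by_cases hdvd : 2 ^ (n - lam) ∣ (J : ℕ)
  · rw [Ufun, dif_pos hdvd]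
    have hb : it * 2 ^ (lam - ℓt) ≤ 2 ^ lam := by
      calc it * 2 ^ (lam - ℓt) ≤ 2 ^ ℓt * 2 ^ (lam - ℓt) := Nat.mul_le_mul_right _ hit
        _ = 2 ^ lam := by rw [← pow_add]; congr 1; omega
    set b : Fin (2 ^ lam + 1) := ⟨it * 2 ^ (lam - ℓt), Nat.lt_succ_of_le hb⟩ with hbdef
    have hg : gridPt ℓt it = gridPt lam (b : ℕ) := (gridPt_coarse hl hit).symm
    rw [hg, Lag_grid]
    obtain ⟨c, hc⟩ := hdvd
    have ha : (J : ℕ) / 2 ^ (n - lam) = c := by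
      rw [hc, Nat.mul_div_cancel_left _ hpos]
    have hiff : (b = (⟨(J : ℕ) / 2 ^ (n - lam),
        Nat.lt_succ_of_le (div_bound (Nat.lt_succ_iff.mp J.isLt))⟩ : Fin (2 ^ lam + 1)))
        ↔ (J : ℕ) = it * 2 ^ (n - ℓt) := by
      rw [Fin.ext_iff]
      show it * 2 ^ (lam - ℓt) = (J : ℕ) / 2 ^ (n - lam) ↔ (J : ℕ) = it * 2 ^ (n - ℓt)
      rw [ha]
      constructor
      · intro hbc
        rw [hc, ← hbc, ← hpow]
        ring
      · intro hJ
        have h2 : 2 ^ (n - lam) * c = 2 ^ (n - lam) * (it * 2 ^ (lam - ℓt)) := by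
          rw [← hc, hJ, ← hpow]
          ring
        exact (Nat.eq_of_mul_eq_mul_left hpos h2).symm
    by_cases hcond : (J : ℕ) = it * 2 ^ (n - ℓt)
    · rw [if_pos hcond, if_pos (hiff.mpr hcond)]
    · rw [if_neg hcond, if_neg (fun hb2 => hcond (hiff.mp hb2))]
  · rw [Ufun, dif_neg hdvd]
    have hcond : ¬ (J : ℕ) = it * 2 ^ (n - ℓt) := by
      intro h
      apply hdvd
      rw [h]
      exact Dvd.dvd.mul_left (pow_dvd_pow 2 (by omega : n - lam ≤ n - ℓt)) it
    rw [if_neg hcond]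

lemma reindex_sum (d : ℕ) (φ : ℕ → ℕ → Set.Icc (0:ℝ) 1 → ℝ)
    (hinv : ∀ lam : ℕ, IsUnit (gridMat φ lam))
    (f : (Fin d → Set.Icc (0:ℝ) 1) → ℝ) (p : Fin d → Set.Icc (0:ℝ) 1) (n : ℕ)
    (ℓ' : Fin d → ℕ) (hln : ∀ t, ℓ' t ≤ n) :
    ∑ j : (∀ t, Fin (2 ^ (ℓ' t) + 1)),
        f (fun t => gridPt (ℓ' t) (j t)) * ∏ t, Lag φ hinv (ℓ' t) (j t) (p t)
    = ∑ J : (∀ t, Fin (2 ^ n + 1)),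
        f (fun t => gridPt n (J t)) * ∏ t, Ufun φ hinv (p t) n (ℓ' t) (J t) := by
  classical
  have hjle : ∀ (j : ∀ t, Fin (2 ^ (ℓ' t) + 1)) (t : Fin d), (j t : ℕ) ≤ 2 ^ (ℓ' t) :=
    fun j t => Nat.lt_succ_iff.mp (j t).isLt
  refine Finset.sum_of_injOn
    (fun j => fun t => (⟨(j t : ℕ) * 2 ^ (n - ℓ' t),
      Nat.lt_succ_of_le (emb_bound (hln t) (hjle j t))⟩ : Fin (2 ^ n + 1)))
    ?_ ?_ ?_ ?_
  · intro j1 _ j2 _ h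
    funext t
    have h1 := congrFun h t
    rw [Fin.mk.injEq] at h1
    exact Fin.ext (Nat.eq_of_mul_eq_mul_right (Nat.pow_pos (by norm_num)) h1)
  · intro j _
    exact Finset.mem_coe.mpr (Finset.mem_univ _)
  · intro J _ hJnot
    have hex : ∃ t, ¬ 2 ^ (n - ℓ' t) ∣ (J t : ℕ) := by
      by_contra hno
      push_neg at hno
      apply hJnot
      refine ⟨fun t => ⟨(J t : ℕ) / 2 ^ (n - ℓ' t),
        Nat.lt_succ_of_le (div_bound (Nat.lt_succ_iff.mp (J t).isLt))⟩,
        Finset.mem_coe.mpr (Finset.mem_univ _), ?_⟩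
      funext t
      exact Fin.ext (Nat.div_mul_cancel (hno t))
    obtain ⟨t, ht⟩ := hex
    have : Ufun φ hinv (p t) n (ℓ' t) (J t) = 0 := by rw [Ufun, dif_neg ht]
    rw [Finset.prod_eq_zero (Finset.mem_univ t) this, mul_zero]
  · intro j _
    congr 1
    · congr 1
      funext t
      exact (gridPt_coarse (hln t) (hjle j t)).symm
    · refine Finset.prod_congr rfl fun t _ => ?_
      have hdvd : 2 ^ (n - ℓ' t) ∣ (j t : ℕ) * 2 ^ (n - ℓ' t) := dvd_mul_left _ _
      rw [Ufun, dif_pos hdvd]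
      have hidx : (⟨((j t : ℕ) * 2 ^ (n - ℓ' t)) / 2 ^ (n - ℓ' t),
          Nat.lt_succ_of_le (div_bound (Nat.lt_succ_iff.mp
            (Nat.lt_succ_of_le (emb_bound (hln t) (hjle j t)))))⟩ : Fin (2 ^ (ℓ' t) + 1))
          = j t :=
        Fin.ext (Nat.mul_div_cancel _ (Nat.pow_pos (by norm_num)))
      rw [hidx]

/-- **Theorem 4.3 (sparse grid combination technique).** -/
theorem sparse_grid_combination_technique
    (d n : ℕ) (hd : 1 ≤ d)
    (φ : ℕ → ℕ → Set.Icc (0:ℝ) 1 → ℝ)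
    (hinv : ∀ lam : ℕ, IsUnit (Matrix.of fun j j' : Fin (2 ^ lam + 1) =>
      φ lam (j' : ℕ) (gridPt lam (j : ℕ))))
    (f : (Fin d → Set.Icc (0:ℝ) 1) → ℝ)
    (F : (Fin d → ℕ) → ((Fin d → Set.Icc (0:ℝ) 1) → ℝ))
    (hFmem : ∀ ℓ', F ℓ' ∈ nodalSpace d φ ℓ')
    (hFinterp : ∀ ℓ' : Fin d → ℕ, ∀ i : (∀ t, Fin (2 ^ (ℓ' t) + 1)),
      F ℓ' (fun t => gridPt (ℓ' t) (i t)) = f (fun t => gridPt (ℓ' t) (i t)))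
    (hsplit : ∀ ℓ' : Fin d → ℕ, (∑ t, ℓ' t) ≤ n →
      nodalSpace d φ ℓ' ≤ hierSpace d φ ℓ')
    (huniq : ∀ g ∈ sparseSpace d n φ,
      (∀ ℓ i : Fin d → ℕ, (∑ t, ℓ t) ≤ n → (∀ t, i t ∈ hierIndex (ℓ t)) →
        g (fun t => gridPt (ℓ t) (i t)) = 0) → g = 0) :
    combined d n F ∈ sparseSpace d n φ
    ∧ (∀ ℓ i : Fin d → ℕ, (∑ t, ℓ t) ≤ n → (∀ t, i t ∈ hierIndex (ℓ t)) →
        combined d n F (fun t => gridPt (ℓ t) (i t)) = f (fun t => gridPt (ℓ t) (i t)))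
    ∧ ∀ fs ∈ sparseSpace d n φ,
        (∀ ℓ i : Fin d → ℕ, (∑ t, ℓ t) ≤ n → (∀ t, i t ∈ hierIndex (ℓ t)) →
          fs (fun t => gridPt (ℓ t) (i t)) = f (fun t => gridPt (ℓ t) (i t))) →
        combined d n F = fs := by
  classical
  have hfilter_sum : ∀ q : ℕ, ∀ ℓ' ∈ (Fintype.piFinset fun _ : Fin d => Finset.range (n + 1)).filter
      (fun ℓ' => (∑ t, (ℓ' t : ℤ)) = (n : ℤ) - q), (∑ t, ℓ' t) ≤ n := by
    intro q ℓ' hℓ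
    have h1 := (Finset.mem_filter.mp hℓ).2
    have h2 : ((∑ t, ℓ' t : ℕ) : ℤ) = (n : ℤ) - q := by push_cast; exact h1
    omega
  have part1 : combined d n F ∈ sparseSpace d n φ := by
    rw [combined]
    refine Submodule.sum_mem _ fun q _ =>
      Submodule.smul_mem _ _ (Submodule.sum_mem _ fun ℓ' hℓ => ?_)
    have hs := hfilter_sum q ℓ' hℓ
    have h1 : F ℓ' ∈ hierSpace d φ ℓ' := hsplit ℓ' hs (hFmem ℓ')
    have h2 : hierSpace d φ ℓ' ≤ sparseSpace d n φ := by
      rw [hierSpace, Submodule.span_le]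
      rintro g ⟨⟨pr, hpr⟩, rfl⟩
      exact Submodule.subset_span
        ⟨⟨pr, ⟨le_trans (Finset.sum_le_sum fun t _ => hpr.1 t) hs, hpr.2⟩⟩, rfl⟩
    exact h2 h1
  have part2 : ∀ ℓ i : Fin d → ℕ, (∑ t, ℓ t) ≤ n → (∀ t, i t ∈ hierIndex (ℓ t)) →
      combined d n F (fun t => gridPt (ℓ t) (i t)) = f (fun t => gridPt (ℓ t) (i t)) := by
    intro ℓ i hℓn hi
    set p : Fin d → Set.Icc (0:ℝ) 1 := fun t => gridPt (ℓ t) (i t) with hp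
    have hile : ∀ t, i t ≤ 2 ^ (ℓ t) := fun t => hierIndex_le (hi t)
    have hltn : ∀ t, ℓ t ≤ n := fun t =>
      le_trans (Finset.single_le_sum (fun s _ => Nat.zero_le _) (Finset.mem_univ t)) hℓn
    set Jstar : ∀ _ : Fin d, Fin (2 ^ n + 1) := fun t => ⟨i t * 2 ^ (n - ℓ t),
      Nat.lt_succ_of_le (emb_bound (hltn t) (hile t))⟩ with hJstar
    have hline : ∀ q : ℕ, ∀ ℓ' ∈ (Fintype.piFinset fun _ : Fin d => Finset.range (n + 1)).filter
        (fun ℓ' => (∑ t, (ℓ' t : ℤ)) = (n : ℤ) - q),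
        F ℓ' p = ∑ J : (∀ _ : Fin d, Fin (2 ^ n + 1)),
          f (fun t => gridPt n (J t)) * ∏ t, Ufun φ hinv (p t) n (ℓ' t) (J t) := by
      intro q ℓ' hℓ'
      have hln : ∀ t, ℓ' t ≤ n := by
        have h3 := (Finset.mem_filter.mp hℓ').1
        rw [Fintype.mem_piFinset] at h3
        exact fun t => Nat.lt_succ_iff.mp (Finset.mem_range.mp (h3 t))
      rw [nodal_repr d φ hinv ℓ' (hFmem ℓ') p]
      rw [Finset.sum_congr rfl fun j _ => by rw [hFinterp ℓ' j]]
      exact reindex_sum d φ hinv f p n ℓ' hln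
    have hcc : ∀ J : (∀ _ : Fin d, Fin (2 ^ n + 1)),
        (∑ q ∈ Finset.range d, (-1:ℝ) ^ q * ((d - 1).choose q : ℝ) *
          ∑ ℓ' ∈ (Fintype.piFinset fun _ : Fin d => Finset.range (n + 1)).filter
            (fun ℓ' => (∑ t, (ℓ' t : ℤ)) = (n : ℤ) - q),
            ∏ t, Ufun φ hinv (p t) n (ℓ' t) (J t))
        = if J = Jstar then 1 else 0 := by
      intro J
      have h1 := comb_core d n hd (fun t lam => Ufun φ hinv (p t) n lam (J t)) ℓ
        (fun t => if (J t : ℕ) = i t * 2 ^ (n - ℓ t) then 1 else 0) hℓn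
        (fun t lam ha hb => by
          show Ufun φ hinv (gridPt (ℓ t) (i t)) n lam (J t) = _
          exact Ufun_const φ hinv (hile t) ha hb (J t))
      rw [h1, Finset.prod_boole]
      by_cases hJe : J = Jstar
      · rw [if_pos (fun t _ => by rw [hJe]), if_pos hJe]
      · rw [if_neg (fun hall => hJe (funext fun t =>
          Fin.ext (hall t (Finset.mem_univ t)))), if_neg hJe]
    have e0 : combined d n F p = ∑ q ∈ Finset.range d,
        (-1:ℝ) ^ q * ((d - 1).choose q : ℝ) *
        ∑ ℓ' ∈ (Fintype.piFinset fun _ : Fin d => Finset.range (n + 1)).filter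
          (fun ℓ' => (∑ t, (ℓ' t : ℤ)) = (n : ℤ) - q), F ℓ' p := by
      rw [combined, Finset.sum_apply]
      refine Finset.sum_congr rfl fun q _ => ?_
      rw [Pi.smul_apply, Finset.sum_apply, smul_eq_mul]
    rw [e0]
    calc ∑ q ∈ Finset.range d, (-1:ℝ) ^ q * ((d - 1).choose q : ℝ) *
        ∑ ℓ' ∈ (Fintype.piFinset fun _ : Fin d => Finset.range (n + 1)).filter
          (fun ℓ' => (∑ t, (ℓ' t : ℤ)) = (n : ℤ) - q), F ℓ' p
        = ∑ q ∈ Finset.range d, ∑ J : (∀ _ : Fin d, Fin (2 ^ n + 1)),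
            (-1:ℝ) ^ q * ((d - 1).choose q : ℝ) *
            (f (fun t => gridPt n (J t)) *
              ∑ ℓ' ∈ (Fintype.piFinset fun _ : Fin d => Finset.range (n + 1)).filter
                (fun ℓ' => (∑ t, (ℓ' t : ℤ)) = (n : ℤ) - q),
                ∏ t, Ufun φ hinv (p t) n (ℓ' t) (J t)) := by
          refine Finset.sum_congr rfl fun q hq => ?_
          rw [Finset.sum_congr rfl (hline q), Finset.sum_comm, Finset.mul_sum]
          refine Finset.sum_congr rfl fun J _ => ?_
          rw [← Finset.mul_sum]
      _ = ∑ J : (∀ _ : Fin d, Fin (2 ^ n + 1)), ∑ q ∈ Finset.range d,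
            (-1:ℝ) ^ q * ((d - 1).choose q : ℝ) *
            (f (fun t => gridPt n (J t)) *
              ∑ ℓ' ∈ (Fintype.piFinset fun _ : Fin d => Finset.range (n + 1)).filter
                (fun ℓ' => (∑ t, (ℓ' t : ℤ)) = (n : ℤ) - q),
                ∏ t, Ufun φ hinv (p t) n (ℓ' t) (J t)) := Finset.sum_comm
      _ = ∑ J : (∀ _ : Fin d, Fin (2 ^ n + 1)), f (fun t => gridPt n (J t)) *
            ∑ q ∈ Finset.range d, (-1:ℝ) ^ q * ((d - 1).choose q : ℝ) *
              ∑ ℓ' ∈ (Fintype.piFinset fun _ : Fin d => Finset.range (n + 1)).filter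
                (fun ℓ' => (∑ t, (ℓ' t : ℤ)) = (n : ℤ) - q),
                ∏ t, Ufun φ hinv (p t) n (ℓ' t) (J t) := by
          refine Finset.sum_congr rfl fun J _ => ?_
          rw [Finset.mul_sum]
          exact Finset.sum_congr rfl fun q _ => by ring
      _ = ∑ J : (∀ _ : Fin d, Fin (2 ^ n + 1)), f (fun t => gridPt n (J t)) *
            (if J = Jstar then 1 else 0) := by
          refine Finset.sum_congr rfl fun J _ => ?_
          rw [hcc J]
      _ = f (fun t => gridPt n (Jstar t)) := by
          simp only [mul_ite, mul_one, mul_zero]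
          rw [Finset.sum_ite_eq' Finset.univ Jstar]
          rw [if_pos (Finset.mem_univ _)]
      _ = f p := by
          refine congrArg f (funext fun t => ?_)
          show gridPt n (i t * 2 ^ (n - ℓ t)) = p t
          rw [hp]
          exact gridPt_coarse (hltn t) (hile t)
  refine ⟨part1, part2, ?_⟩
  intro fs hfs hint
  have hsub : combined d n F - fs ∈ sparseSpace d n φ := Submodule.sub_mem _ part1 hfs
  have hz := huniq _ hsub (fun ℓ i hl hi => by
    rw [Pi.sub_apply, part2 ℓ i hl hi, hint ℓ i hl hi, sub_self])
  exact sub_eq_zero.mp hz
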